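/- arXiv:1601.01178 — 5 statements merged into one kernel-verified Lean document; each statement's English description precedes it below -/
import Mathlib

section
/- For a single observation from a two-component Gaussian mixture with the improper prior π(μ,σ) = 1/σ on the global location-scale parameter and any proper prior on the remaining parameters, the marginal likelihood is infinite; i.e., the posterior is improper for n = 1. -/
/-!
Fix the parameters `θ` of the proper prior. For each `σ > 0` the mixture density, as a function
of the location `μ`, is a convex combination of translated Gaussian densities in `μ`, so it
integrates to `1` over `μ`. By Tonelli the marginal over `(μ, σ)` is therefore
`∫_0^∞ σ⁻¹ dσ = ∞` for every `θ`, and integrating `∞` against the probability measure `Q` gives `∞`.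
-/

open MeasureTheory ProbabilityTheory Finset

/-- The Gaussian density with mean `m` and standard deviation `s`. -/
noncomputable def normalPDF (m s x : ℝ) : ℝ :=
  (Real.sqrt (2 * Real.pi) * s)⁻¹ * Real.exp (-((x - m) ^ 2 / (2 * s ^ 2)))

lemma normalPDF_nonneg {s : ℝ} (hs : 0 ≤ s) (m x : ℝ) : 0 ≤ normalPDF m s x := by
  unfold normalPDF
  positivity

@[fun_prop]
lemma Measurable.normalPDF {α : Type*} [MeasurableSpace α] {m s x : α → ℝ}
    (hm : Measurable m) (hs : Measurable s) (hx : Measurable x) :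
    Measurable fun a => normalPDF (m a) (s a) (x a) := by
  unfold _root_.normalPDF
  fun_prop

lemma normalPDF_eq_gaussianPDFReal {s : ℝ} (hs : 0 < s) (m x : ℝ) :
    normalPDF m s x = gaussianPDFReal x (s ^ 2).toNNReal m := by
  rw [normalPDF, gaussianPDFReal, Real.coe_toNNReal _ (sq_nonneg s),
    Real.sqrt_mul (by positivity) (s ^ 2), Real.sqrt_sq hs.le, neg_div, ← neg_sub x m, neg_sq]

lemma lintegral_normalPDF_add_mean {s : ℝ} (hs : 0 < s) (c x : ℝ) :
    ∫⁻ m, ENNReal.ofReal (normalPDF (m + c) s x) = 1 := by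
  simp_rw [normalPDF_eq_gaussianPDFReal hs]
  rw [lintegral_add_right_eq_self
    (fun m => ENNReal.ofReal (gaussianPDFReal x (s ^ 2).toNNReal m)) c]
  exact lintegral_gaussianPDFReal_eq_one x (Real.toNNReal_pos.mpr (by positivity)).ne'

lemma lintegral_mixture_normalPDF_add_mean {ι : Type*} [Fintype ι] {w s : ι → ℝ}
    (hw : ∀ i, 0 ≤ w i) (hw_sum : ∑ i, w i = 1) (hs : ∀ i, 0 < s i) (c : ι → ℝ) (x : ℝ) :
    ∫⁻ m, ENNReal.ofReal (∑ i, w i * normalPDF (m + c i) (s i) x) = 1 := by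
  have hterm : ∀ i m, 0 ≤ w i * normalPDF (m + c i) (s i) x :=
    fun i m => mul_nonneg (hw i) (normalPDF_nonneg (hs i).le _ _)
  calc ∫⁻ m, ENNReal.ofReal (∑ i, w i * normalPDF (m + c i) (s i) x)
      = ∫⁻ m, ∑ i, ENNReal.ofReal (w i) * ENNReal.ofReal (normalPDF (m + c i) (s i) x) := by
        refine lintegral_congr fun m => ?_
        rw [ENNReal.ofReal_sum_of_nonneg fun i _ => hterm i m]
        exact sum_congr rfl fun i _ => ENNReal.ofReal_mul (hw i)
    _ = ∑ i, ENNReal.ofReal (w i) := by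
        rw [lintegral_finsetSum _ fun i _ => by fun_prop]
        refine sum_congr rfl fun i _ => ?_
        rw [lintegral_const_mul _ (by fun_prop), lintegral_normalPDF_add_mean (hs i), mul_one]
    _ = 1 := by rw [← ENNReal.ofReal_sum_of_nonneg fun i _ => hw i, hw_sum, ENNReal.ofReal_one]

lemma lintegral_Ioi_inv_eq_top : ∫⁻ σ in Set.Ioi (0 : ℝ), ENNReal.ofReal σ⁻¹ = ⊤ := by
  by_contra h
  refine not_integrableOn_Ioi_inv ((lintegral_ofReal_ne_top_iff_integrable
    measurable_inv.aestronglyMeasurable ?_).mp h)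
  filter_upwards [ae_restrict_mem measurableSet_Ioi] with σ hσ
  exact inv_nonneg.mpr (le_of_lt hσ)

lemma lintegral_lintegral_Ioi_mixture_normalPDF_mul_inv_eq_top {ι : Type*} [Fintype ι]
    {w a t : ι → ℝ} (hw : ∀ i, 0 ≤ w i) (hw_sum : ∑ i, w i = 1) (ht : ∀ i, 0 < t i) (x : ℝ) :
    ∫⁻ μ, ∫⁻ σ in Set.Ioi (0 : ℝ),
      ENNReal.ofReal ((∑ i, w i * normalPDF (μ + σ * a i) (σ * t i) x) * σ⁻¹) = ⊤ := by
  have hinner : ∀ σ ∈ Set.Ioi (0 : ℝ),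
      ∫⁻ μ, ENNReal.ofReal ((∑ i, w i * normalPDF (μ + σ * a i) (σ * t i) x) * σ⁻¹)
        = ENNReal.ofReal σ⁻¹ := by
    intro σ hσ
    have hmix := lintegral_mixture_normalPDF_add_mean hw hw_sum
      (fun i => mul_pos hσ (ht i)) (fun i => σ * a i) x
    simp_rw [ENNReal.ofReal_mul (sum_nonneg fun i _ =>
      mul_nonneg (hw i) (normalPDF_nonneg (mul_pos hσ (ht i)).le _ _))]
    rw [lintegral_mul_const _ (by fun_prop), hmix, one_mul]
  rw [lintegral_lintegral_swap (by fun_prop), setLIntegral_congr_fun measurableSet_Ioi hinner]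
  exact lintegral_Ioi_inv_eq_top

/-- For a single observation from a two-component Gaussian mixture, with the improper prior
`π(μ,σ) = 1/σ` on the global location-scale parameter and any proper prior `Q` on the
remaining parameters, the marginal likelihood is infinite: the posterior is improper for
`n = 1`. -/
theorem gaussian_mixture_posterior_improper_one_obs
    {Θ : Type*} [MeasurableSpace Θ] (Q : Measure Θ) [IsProbabilityMeasure Q]
    (p α τ : Θ → Fin 2 → ℝ)
    (hp : ∀ θ i, 0 ≤ p θ i) (hpsum : ∀ θ, ∑ i, p θ i = 1)
    (hτ : ∀ θ i, 0 < τ θ i) (x₁ : ℝ) :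
    ∫⁻ θ, ∫⁻ μ, ∫⁻ σ in Set.Ioi (0 : ℝ),
        ENNReal.ofReal
          ((∑ i, p θ i * normalPDF (μ + σ * α θ i) (σ * τ θ i) x₁) * σ⁻¹)
      ∂volume ∂volume ∂Q = ⊤ := by
  simp_rw [lintegral_lintegral_Ioi_mixture_normalPDF_mul_inv_eq_top (hp _) (hpsum _) (hτ _) x₁]
  rw [lintegral_const, measure_univ, mul_one]
end

section
/- For a single strictly positive integer observation x_1 ≥ 1 from a k-component Poisson mixture reparameterised by component means λ_i = λγ_i/p_i, with improper prior π(λ) = 1/λ on λ > 0 and proper independent priors on (γ, p), the marginal likelihood equals Σ_{i=1}^k ∫ (p_i/x_1) π(γ,p) d(γ,p), which is finite; hence the posterior is proper. -/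
/-!
For `λ > 0` the Poisson likelihood divided by `λ`, `e^{-aλ} (aλ)^n / n! / λ`, is `1/n` times the
density of the Gamma distribution with shape `n` and rate `a`. Hence each mixture component
contributes `p_i / n` to the marginal likelihood, and `∑ p_i = 1` makes it the finite value `1/n`.
-/

open MeasureTheory Finset
open scoped Nat

open ProbabilityTheory Real in
lemma poisson_mul_inv_eq_gammaPDFReal_div {n : ℕ} (hn : 1 ≤ n) (a : ℝ) {l : ℝ} (hl : 0 < l) :
    exp (-(l * a)) * (l * a) ^ n / n ! * l⁻¹ = gammaPDFReal n a l / n := by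
  obtain ⟨m, rfl⟩ := Nat.exists_eq_add_of_le' hn
  have hpow : l ^ ((↑(m + 1) : ℝ) - 1) = l ^ m := by
    rw [Nat.cast_succ, add_sub_cancel_right, rpow_natCast]
  rw [gammaPDFReal, if_pos hl.le, hpow, rpow_natCast, Nat.cast_succ, Gamma_nat_eq_factorial,
    Nat.factorial_succ, Nat.cast_mul, Nat.cast_succ]
  field_simp
  ring

open ProbabilityTheory in
lemma lintegral_Ioi_poisson_mul_inv {n : ℕ} (hn : 1 ≤ n) {a : ℝ} (ha : 0 < a) :
    ∫⁻ l in Set.Ioi (0 : ℝ), ENNReal.ofReal (Real.exp (-(l * a)) * (l * a) ^ n / n ! * l⁻¹)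
      = ENNReal.ofReal (1 / n) := by
  have hn₀ : (0 : ℝ) < n := by exact_mod_cast hn
  have hsupp : (gammaPDF n a).support ⊆ Set.Ici 0 := fun l hl =>
    not_lt.mp fun hneg => hl (gammaPDF_of_neg hneg)
  calc ∫⁻ l in Set.Ioi (0 : ℝ), ENNReal.ofReal (Real.exp (-(l * a)) * (l * a) ^ n / n ! * l⁻¹)
      = ∫⁻ l in Set.Ioi (0 : ℝ), gammaPDF n a l * ENNReal.ofReal (1 / n) := by
        refine setLIntegral_congr_fun measurableSet_Ioi fun l hl => ?_
        rw [poisson_mul_inv_eq_gammaPDFReal_div hn a hl, gammaPDF, div_eq_mul_one_div,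
          ENNReal.ofReal_mul (gammaPDFReal_nonneg hn₀ ha l)]
    _ = ENNReal.ofReal (1 / n) := by
        rw [lintegral_mul_const' _ _ ENNReal.ofReal_ne_top,
          restrict_Ioi_eq_restrict_Ici, setLIntegral_eq_of_support_subset hsupp,
          lintegral_gammaPDF_eq_one hn₀ ha, one_mul]

lemma lintegral_Ioi_poissonMixture_mul_inv {ι : Type*} (s : Finset ι) (w a : ι → ℝ)
    (hw : ∀ i ∈ s, 0 ≤ w i) (ha : ∀ i ∈ s, 0 < a i) {n : ℕ} (hn : 1 ≤ n) :
    ∫⁻ l in Set.Ioi (0 : ℝ),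
        ENNReal.ofReal ((∑ i ∈ s, w i * Real.exp (-(l * a i)) * (l * a i) ^ n / n !) * l⁻¹)
      = ENNReal.ofReal (∑ i ∈ s, w i / n) := by
  calc ∫⁻ l in Set.Ioi (0 : ℝ),
        ENNReal.ofReal ((∑ i ∈ s, w i * Real.exp (-(l * a i)) * (l * a i) ^ n / n !) * l⁻¹)
      = ∫⁻ l in Set.Ioi (0 : ℝ), ∑ i ∈ s,
          ENNReal.ofReal (w i) *
            ENNReal.ofReal (Real.exp (-(l * a i)) * (l * a i) ^ n / n ! * l⁻¹) := by
        refine setLIntegral_congr_fun measurableSet_Ioi fun l (hl : 0 < l) => ?_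
        have hterm_nonneg : ∀ i ∈ s,
            0 ≤ w i * Real.exp (-(l * a i)) * (l * a i) ^ n / n ! * l⁻¹ := fun i hi => by
          have := ha i hi
          have := hw i hi
          positivity
        rw [sum_mul, ENNReal.ofReal_sum_of_nonneg hterm_nonneg]
        refine sum_congr rfl fun i hi => ?_
        rw [← ENNReal.ofReal_mul (hw i hi)]
        congr 1
        ring
    _ = ∑ i ∈ s, ENNReal.ofReal (w i) * ENNReal.ofReal (1 / n) := by
        rw [lintegral_finsetSum _ fun i _ => by fun_prop]
        refine sum_congr rfl fun i hi => ?_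
        rw [lintegral_const_mul' _ _ ENNReal.ofReal_ne_top,
          lintegral_Ioi_poisson_mul_inv hn (ha i hi)]
    _ = ENNReal.ofReal (∑ i ∈ s, w i / n) := by
        rw [ENNReal.ofReal_sum_of_nonneg fun i hi => div_nonneg (hw i hi) n.cast_nonneg]
        refine sum_congr rfl fun i hi => ?_
        rw [← ENNReal.ofReal_mul (hw i hi), mul_one_div]

theorem poisson_mixture_posterior_proper_general
    {Θ : Type*} [MeasurableSpace Θ] (Q : Measure Θ) [IsProbabilityMeasure Q] (k : ℕ)
    (γ p : Θ → Fin k → ℝ)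
    (hγ : ∀ θ i, 0 < γ θ i)
    (hp : ∀ θ i, 0 < p θ i) (hpsum : ∀ θ, ∑ i, p θ i = 1)
    (x₁ : ℕ) (hx : 1 ≤ x₁) :
    (∫⁻ θ, ∫⁻ l in Set.Ioi (0 : ℝ),
        ENNReal.ofReal
          ((∑ i, p θ i * Real.exp (-(l * γ θ i / p θ i)) *
              (l * γ θ i / p θ i) ^ x₁ / (Nat.factorial x₁ : ℝ)) * l⁻¹)
      ∂volume ∂Q)
      = ∫⁻ θ, ENNReal.ofReal (∑ i, p θ i / (x₁ : ℝ)) ∂Q ∧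
    (∫⁻ θ, ∫⁻ l in Set.Ioi (0 : ℝ),
        ENNReal.ofReal
          ((∑ i, p θ i * Real.exp (-(l * γ θ i / p θ i)) *
              (l * γ θ i / p θ i) ^ x₁ / (Nat.factorial x₁ : ℝ)) * l⁻¹)
      ∂volume ∂Q) < ⊤ := by
  have hmarginal : ∀ θ, ∫⁻ l in Set.Ioi (0 : ℝ),
      ENNReal.ofReal
        ((∑ i, p θ i * Real.exp (-(l * γ θ i / p θ i)) *
            (l * γ θ i / p θ i) ^ x₁ / (Nat.factorial x₁ : ℝ)) * l⁻¹)
      = ENNReal.ofReal (∑ i, p θ i / (x₁ : ℝ)) := fun θ => by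
    simpa only [mul_div_assoc] using lintegral_Ioi_poissonMixture_mul_inv univ (p θ)
      (fun i => γ θ i / p θ i) (fun i _ => (hp θ i).le)
      (fun i _ => div_pos (hγ θ i) (hp θ i)) hx
  refine ⟨lintegral_congr hmarginal, ?_⟩
  have hmass : ∀ θ, ∑ i, p θ i / (x₁ : ℝ) = 1 / x₁ := fun θ => by rw [← sum_div, hpsum]
  rw [lintegral_congr hmarginal]
  simp only [hmass, lintegral_const, measure_univ, mul_one, ENNReal.ofReal_lt_top]

/-- For a single strictly positive integer observation `x₁ ≥ 1` from a `k`-component Poisson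
mixture with component means `λ γ i / p i`, improper prior `π(λ) = 1/λ` and proper prior `Q`
on `(γ, p)`, the marginal likelihood equals `∫ (∑ i, p i / x₁) dQ` and is finite: the
posterior is proper. -/
theorem poisson_mixture_posterior_proper
    {Θ : Type*} [MeasurableSpace Θ] (Q : Measure Θ) [IsProbabilityMeasure Q] (k : ℕ)
    (γ p : Θ → Fin k → ℝ)
    (hγ : ∀ θ i, 0 < γ θ i) (hγsum : ∀ θ, ∑ i, γ θ i = 1)
    (hp : ∀ θ i, 0 < p θ i) (hpsum : ∀ θ, ∑ i, p θ i = 1)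
    (x₁ : ℕ) (hx : 1 ≤ x₁) :
    (∫⁻ θ, ∫⁻ l in Set.Ioi (0 : ℝ),
        ENNReal.ofReal
          ((∑ i, p θ i * Real.exp (-(l * γ θ i / p θ i)) *
              (l * γ θ i / p θ i) ^ x₁ / (Nat.factorial x₁ : ℝ)) * l⁻¹)
      ∂volume ∂Q)
      = ∫⁻ θ, ENNReal.ofReal (∑ i, p θ i / (x₁ : ℝ)) ∂Q ∧
    (∫⁻ θ, ∫⁻ l in Set.Ioi (0 : ℝ),
        ENNReal.ofReal
          ((∑ i, p θ i * Real.exp (-(l * γ θ i / p θ i)) *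
              (l * γ θ i / p θ i) ^ x₁ / (Nat.factorial x₁ : ℝ)) * l⁻¹)
      ∂volume ∂Q) < ⊤ :=
  poisson_mixture_posterior_proper_general Q k γ p hγ hp hpsum x₁ hx
end

section
/- For any observation x_1 > 0 from a k-component exponential mixture with component scales λ_i = λγ_i/p_i, improper prior π(λ) = 1/λ, and proper independent priors on (γ, p), the marginal likelihood equals Σ_{i=1}^k ∫ (p_i/x_1) π(γ,p) d(γ,p), which is finite; hence the posterior is proper. -/
/-!
Each mixture component contributes `∫₀^∞ (c/l²) e^{-a/l} dl` to the marginal likelihood, with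
`c = p²/γ` and `a = p x₁/γ`; the substitution `u = 1/l` turns this into `c ∫₀^∞ e^{-a u} du = c/a
= p/x₁`, independently of `γ`. Summing over the components gives `∑ pᵢ/x₁ = 1/x₁`, which is then
integrated against the probability measure on `(γ, p)`.
-/

open MeasureTheory Set Real

theorem lintegral_Ioi_zero_comp_inv (g : ℝ → ENNReal) :
    ∫⁻ x in Ioi 0, ENNReal.ofReal (x ^ 2)⁻¹ * g x⁻¹ = ∫⁻ x in Ioi 0, g x := by
  have himage : (fun x : ℝ => x⁻¹) '' Ioi 0 = Ioi 0 :=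
    ext fun y => ⟨by rintro ⟨x, hx, rfl⟩; exact inv_pos.2 (mem_Ioi.1 hx),
      fun hy => ⟨y⁻¹, inv_pos.2 (mem_Ioi.1 hy), inv_inv y⟩⟩
  conv_rhs => rw [← himage, lintegral_image_eq_lintegral_abs_deriv_mul measurableSet_Ioi
    (fun x hx => (hasDerivAt_inv (ne_of_gt hx)).hasDerivWithinAt) inv_injective.injOn]
  refine setLIntegral_congr_fun measurableSet_Ioi fun x _ => ?_
  rw [abs_neg, abs_of_nonneg (by positivity)]

theorem lintegral_Ioi_exp_neg_mul {a : ℝ} (ha : 0 < a) :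
    ∫⁻ x in Ioi 0, ENNReal.ofReal (exp (-(a * x))) = ENNReal.ofReal a⁻¹ := by
  have hneg : -a < 0 := neg_neg_of_pos ha
  simp only [← neg_mul]
  rw [← ofReal_integral_eq_lintegral_ofReal (integrableOn_exp_mul_Ioi hneg 0)
    (Filter.Eventually.of_forall fun _ => (exp_pos _).le), integral_exp_mul_Ioi hneg]
  simp [neg_div, div_neg]

theorem lintegral_Ioi_inv_sq_mul_exp_neg_div {a : ℝ} (ha : 0 < a) :
    ∫⁻ x in Ioi 0, ENNReal.ofReal ((x ^ 2)⁻¹ * exp (-(a / x))) = ENNReal.ofReal a⁻¹ := by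
  simp_rw [ENNReal.ofReal_mul (inv_nonneg.2 (sq_nonneg _)), div_eq_mul_inv]
  exact (lintegral_Ioi_zero_comp_inv _).trans (lintegral_Ioi_exp_neg_mul ha)

theorem lintegral_Ioi_exponential_component_mul_inv {p γ x : ℝ}
    (hp : 0 < p) (hγ : 0 < γ) (hx : 0 < x) :
    ∫⁻ l in Ioi 0, ENNReal.ofReal (p * (p / (l * γ)) * exp (-(p * x / (l * γ))) * l⁻¹)
      = ENNReal.ofReal (p / x) := by
  have hrewrite : ∀ l : ℝ, p * (p / (l * γ)) * exp (-(p * x / (l * γ))) * l⁻¹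
      = p ^ 2 / γ * ((l ^ 2)⁻¹ * exp (-(p * x / γ / l))) := fun l => by
    rw [div_div, mul_comm γ l]
    ring
  simp_rw [hrewrite, ENNReal.ofReal_mul (by positivity : 0 ≤ p ^ 2 / γ)]
  rw [lintegral_const_mul' _ _ ENNReal.ofReal_ne_top,
    lintegral_Ioi_inv_sq_mul_exp_neg_div (by positivity), ← ENNReal.ofReal_mul (by positivity)]
  congr 1
  field_simp

theorem lintegral_Ioi_exponential_mixture_mul_inv {ι : Type*} [Fintype ι] {p γ : ι → ℝ}
    (hp : ∀ i, 0 < p i) (hγ : ∀ i, 0 < γ i) {x : ℝ} (hx : 0 < x) :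
    ∫⁻ l in Ioi 0,
        ENNReal.ofReal ((∑ i, p i * (p i / (l * γ i)) * exp (-(p i * x / (l * γ i)))) * l⁻¹)
      = ENNReal.ofReal (∑ i, p i / x) := by
  have hsplit : ∀ l ∈ Ioi (0 : ℝ),
      ENNReal.ofReal ((∑ i, p i * (p i / (l * γ i)) * exp (-(p i * x / (l * γ i)))) * l⁻¹)
        = ∑ i, ENNReal.ofReal (p i * (p i / (l * γ i)) * exp (-(p i * x / (l * γ i))) * l⁻¹) :=
    fun l hl => by
      have := mem_Ioi.1 hl
      rw [Finset.sum_mul, ENNReal.ofReal_sum_of_nonneg fun i _ => by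
        have := hp i; have := hγ i; positivity]
  rw [setLIntegral_congr_fun measurableSet_Ioi hsplit,
    lintegral_finsetSum _ fun i _ => by fun_prop,
    ENNReal.ofReal_sum_of_nonneg fun i _ => by have := hp i; positivity]
  exact Finset.sum_congr rfl fun i _ =>
    lintegral_Ioi_exponential_component_mul_inv (hp i) (hγ i) hx

open MeasureTheory Finset

theorem exponential_mixture_posterior_proper_general
    {Θ : Type*} [MeasurableSpace Θ] (Q : Measure Θ) [IsProbabilityMeasure Q] (k : ℕ)
    (γ p : Θ → Fin k → ℝ)
    (hγ : ∀ θ i, 0 < γ θ i)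
    (hp : ∀ θ i, 0 < p θ i) (hpsum : ∀ θ, ∑ i, p θ i = 1)
    (x₁ : ℝ) (hx : 0 < x₁) :
    (∫⁻ θ, ∫⁻ l in Set.Ioi (0 : ℝ),
        ENNReal.ofReal
          ((∑ i, p θ i * (p θ i / (l * γ θ i)) * Real.exp (-(p θ i * x₁ / (l * γ θ i)))) * l⁻¹)
      ∂volume ∂Q)
      = ∫⁻ θ, ENNReal.ofReal (∑ i, p θ i / x₁) ∂Q ∧
    (∫⁻ θ, ∫⁻ l in Set.Ioi (0 : ℝ),
        ENNReal.ofReal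
          ((∑ i, p θ i * (p θ i / (l * γ θ i)) * Real.exp (-(p θ i * x₁ / (l * γ θ i)))) * l⁻¹)
      ∂volume ∂Q) < ⊤ := by
  simp_rw [lintegral_Ioi_exponential_mixture_mul_inv (hp _) (hγ _) hx, true_and]
  simp_rw [← sum_div, hpsum, lintegral_const, measure_univ, mul_one]
  exact ENNReal.ofReal_lt_top

/-- For a single observation `x₁ > 0` from a `k`-component exponential mixture with component
scales `λ γ i / p i`, improper prior `π(λ) = 1/λ` and proper prior `Q` on `(γ, p)`, the
marginal likelihood equals `∫ (∑ i, p i / x₁) dQ` and is finite: the posterior is proper. -/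
theorem exponential_mixture_posterior_proper
    {Θ : Type*} [MeasurableSpace Θ] (Q : Measure Θ) [IsProbabilityMeasure Q] (k : ℕ)
    (γ p : Θ → Fin k → ℝ)
    (hγ : ∀ θ i, 0 < γ θ i) (hγsum : ∀ θ, ∑ i, γ θ i = 1)
    (hp : ∀ θ i, 0 < p θ i) (hpsum : ∀ θ, ∑ i, p θ i = 1)
    (x₁ : ℝ) (hx : 0 < x₁) :
    (∫⁻ θ, ∫⁻ l in Set.Ioi (0 : ℝ),
        ENNReal.ofReal
          ((∑ i, p θ i * (p θ i / (l * γ θ i)) * Real.exp (-(p θ i * x₁ / (l * γ θ i)))) * l⁻¹)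
      ∂volume ∂Q)
      = ∫⁻ θ, ENNReal.ofReal (∑ i, p θ i / x₁) ∂Q ∧
    (∫⁻ θ, ∫⁻ l in Set.Ioi (0 : ℝ),
        ENNReal.ofReal
          ((∑ i, p θ i * (p θ i / (l * γ θ i)) * Real.exp (-(p θ i * x₁ / (l * γ θ i)))) * l⁻¹)
      ∂volume ∂Q) < ⊤ :=
  exponential_mixture_posterior_proper_general Q k γ p hγ hp hpsum x₁ hx
end

section
/- If the posterior distribution given observations x_1,…,x_m is proper (finite marginal likelihood) and the likelihood of further observations x_{m+1},…,x_n given the parameters is a probability density in those observations, then the posterior given the full sample x_1,…,x_n is proper for almost every (x_{m+1},…,x_n). -/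
open MeasureTheory Finset

/-- Lebesgue integral of a product of one-variable functions over a finite product space. -/
lemma lintegral_pi_prod_eq_pow {g : ℝ → ENNReal} (hg : Measurable g) :
    ∀ n : ℕ, ∫⁻ y : Fin n → ℝ, ∏ j, g (y j) = (∫⁻ t, g t) ^ n := by
  intro n
  induction n with
  | zero =>
      rw [Finset.univ_eq_empty]
      simp only [Finset.prod_empty, lintegral_const, pow_zero, one_mul]
      rw [MeasureTheory.volume_pi, Measure.pi_univ]
      simp
  | succ n ih =>
      have hmp := (measurePreserving_piFinSuccAbove
        (fun _ : Fin (n + 1) => (volume : Measure ℝ)) 0)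
      calc ∫⁻ y : Fin (n + 1) → ℝ, ∏ j, g (y j)
          = ∫⁻ p : ℝ × (Fin n → ℝ), g p.1 * ∏ j, g (p.2 j) ∂((volume : Measure ℝ).prod
              (Measure.pi fun _ => volume)) := by
            rw [MeasureTheory.volume_pi, ← hmp.map_eq,
              lintegral_map_equiv (fun p : ℝ × (Fin n → ℝ) => g p.1 * ∏ j, g (p.2 j))
                (MeasurableEquiv.piFinSuccAbove (fun _ : Fin (n + 1) => ℝ) 0)]
            refine lintegral_congr fun y => ?_
            rw [Fin.prod_univ_succAbove (fun j => g (y j)) 0]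
            rfl
        _ = (∫⁻ t, g t) * ∫⁻ y : Fin n → ℝ, ∏ j, g (y j) :=
            lintegral_prod_mul hg.aemeasurable
              (Finset.measurable_prod _ fun j _ =>
                hg.comp (measurable_pi_apply j)).aemeasurable
        _ = (∫⁻ t, g t) ^ (n + 1) := by rw [ih, pow_succ, mul_comm]

/-- If the posterior given `x 1, …, x m` is proper (positive finite marginal likelihood) under
a σ-finite (possibly improper) prior `π`, and the observations are conditionally i.i.d. with
probability density `f θ` given the parameter `θ`, then the posterior given the full sample
is proper for almost every value of the additional observations. -/
theorem posterior_proper_extends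
    {Θ : Type*} [MeasurableSpace Θ] (π : Measure Θ) [SigmaFinite π]
    (f : Θ → ℝ → ENNReal) (hf : Measurable (Function.uncurry f))
    (hdens : ∀ θ, ∫⁻ x, f θ x = 1)
    (m n : ℕ) (x : Fin m → ℝ)
    (hpos : 0 < ∫⁻ θ, ∏ j, f θ (x j) ∂π)
    (hfin : ∫⁻ θ, ∏ j, f θ (x j) ∂π < ⊤) :
    ∀ᵐ y ∂(volume : Measure (Fin n → ℝ)),
      ∫⁻ θ, (∏ j, f θ (x j)) * ∏ j, f θ (y j) ∂π < ⊤ := by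
  -- the joint integrand is measurable on the product space
  have hF : Measurable fun p : Θ × (Fin n → ℝ) =>
      (∏ j, f p.1 (x j)) * ∏ j, f p.1 (p.2 j) := by
    refine Measurable.mul ?_ ?_
    · exact Finset.measurable_prod _ fun j _ =>
        hf.comp (measurable_fst.prodMk measurable_const)
    · exact Finset.measurable_prod _ fun j _ =>
        hf.comp (measurable_fst.prodMk ((measurable_pi_apply j).comp measurable_snd))
  -- the marginal-likelihood function is measurable in y
  have hg : Measurable fun y : Fin n → ℝ =>
      ∫⁻ θ, (∏ j, f θ (x j)) * ∏ j, f θ (y j) ∂π :=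
    Measurable.lintegral_prod_left
      (f := fun θ (y : Fin n → ℝ) => (∏ j, f θ (x j)) * ∏ j, f θ (y j)) hF
  -- compute the total integral using Tonelli
  have hswap : ∫⁻ y : Fin n → ℝ, ∫⁻ θ, (∏ j, f θ (x j)) * ∏ j, f θ (y j) ∂π
      = ∫⁻ θ, ∫⁻ y : Fin n → ℝ, (∏ j, f θ (x j)) * ∏ j, f θ (y j) ∂volume ∂π :=
    lintegral_lintegral_swap (hF.comp measurable_swap).aemeasurable
  have hinner : ∀ θ, ∫⁻ y : Fin n → ℝ, (∏ j, f θ (x j)) * ∏ j, f θ (y j) ∂volume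
      = ∏ j, f θ (x j) := by
    intro θ
    have hmeasθ : Measurable fun y : Fin n → ℝ => ∏ j, f θ (y j) :=
      Finset.measurable_prod _ fun j _ =>
        hf.of_uncurry_left.comp (measurable_pi_apply j)
    rw [lintegral_const_mul (∏ j, f θ (x j)) hmeasθ,
      lintegral_pi_prod_eq_pow hf.of_uncurry_left, hdens θ, one_pow, mul_one]
  have htot : ∫⁻ y : Fin n → ℝ, ∫⁻ θ, (∏ j, f θ (x j)) * ∏ j, f θ (y j) ∂π
      = ∫⁻ θ, ∏ j, f θ (x j) ∂π := by
    rw [hswap]; exact lintegral_congr hinner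
  exact ae_lt_top hg (htot ▸ hfin.ne)
end

section
/- For a compound Poisson observation with pmf P(X = x|λ) = ∫ (λξ)^x e^{−λξ}/x! dν(ξ), where ν is a probability measure on (0,∞), the improper prior π(λ) = 1/λ and a single observation x_1 ≥ 1 yield a finite marginal: ∫_0^∞ P(X = x_1|λ) (1/λ) dλ = 1/x_1. -/
open MeasureTheory ProbabilityTheory Set

lemma lintegral_Ioi_gammaPDF_eq_one {a r : ℝ} (ha : 0 < a) (hr : 0 < r) :
    ∫⁻ x in Ioi 0, gammaPDF a r x = 1 := by
  conv_rhs =>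
    rw [← lintegral_gammaPDF_eq_one ha hr, ← lintegral_add_compl _ (measurableSet_Ici (a := 0))]
  rw [setLIntegral_congr Ioi_ae_eq_Ici, compl_Ici, lintegral_gammaPDF_of_nonpos le_rfl, add_zero]

/-- Against the scale-invariant measure `dl / l`, the Poisson weight of `n ≥ 1` at rate `l c`
is `1 / n` times the `Gamma(n, c)` density in `l`. -/
lemma poisson_weight_mul_inv_eq_gammaPDF {l c : ℝ} (hl : 0 < l) {n : ℕ} (hn : 1 ≤ n) :
    ENNReal.ofReal ((l * c) ^ n * Real.exp (-(l * c)) / (n.factorial : ℝ)) * ENNReal.ofReal l⁻¹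
      = ENNReal.ofReal (1 / (n : ℝ)) * gammaPDF n c l := by
  obtain ⟨m, rfl⟩ : ∃ m, n = m + 1 := ⟨n - 1, by omega⟩
  rw [gammaPDF_of_nonneg hl.le, ← ENNReal.ofReal_mul' (by positivity),
    ← ENNReal.ofReal_mul (by positivity)]
  congr 1
  have hΓ : Real.Gamma ((m + 1 : ℕ) : ℝ) = m.factorial := by
    exact_mod_cast Real.Gamma_nat_eq_factorial m
  have hexp : ((m + 1 : ℕ) : ℝ) - 1 = (m : ℝ) := by push_cast; ring
  rw [hΓ, hexp, Nat.factorial_succ, mul_comm c l]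
  simp only [Real.rpow_natCast]
  push_cast
  field_simp
  ring

lemma lintegral_Ioi_poisson_weight_mul_inv {c : ℝ} (hc : 0 < c) {n : ℕ} (hn : 1 ≤ n) :
    ∫⁻ l in Ioi (0 : ℝ),
        ENNReal.ofReal ((l * c) ^ n * Real.exp (-(l * c)) / (n.factorial : ℝ))
          * ENNReal.ofReal l⁻¹
      = ENNReal.ofReal (1 / (n : ℝ)) := by
  rw [setLIntegral_congr_fun measurableSet_Ioi
      (fun l (hl : 0 < l) ↦ poisson_weight_mul_inv_eq_gammaPDF hl hn),
    lintegral_const_mul' _ _ ENNReal.ofReal_ne_top,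
    lintegral_Ioi_gammaPDF_eq_one (by exact_mod_cast hn) hc, mul_one]

/-- For a compound Poisson observation with pmf
`P(X = x | λ) = ∫ (λξ)^x e^{-λξ} / x! dν(ξ)`, where `ν` is a probability measure
concentrated on `(0, ∞)`, the improper prior `π(λ) = 1/λ` and a single observation
`x₁ ≥ 1` yield a finite marginal equal to `1 / x₁`. -/
theorem compound_poisson_marginal (ν : Measure ℝ) [IsProbabilityMeasure ν]
    (hν : ∀ᵐ ξ ∂ν, 0 < ξ) (x₁ : ℕ) (hx : 1 ≤ x₁) :
    ∫⁻ l in Set.Ioi (0 : ℝ),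
        (∫⁻ ξ, ENNReal.ofReal ((l * ξ) ^ x₁ * Real.exp (-(l * ξ)) / (Nat.factorial x₁ : ℝ)) ∂ν)
          * ENNReal.ofReal l⁻¹
      = ENNReal.ofReal (1 / (x₁ : ℝ)) := by
  calc _ = ∫⁻ ξ, (∫⁻ l in Ioi (0 : ℝ),
          ENNReal.ofReal ((l * ξ) ^ x₁ * Real.exp (-(l * ξ)) / (Nat.factorial x₁ : ℝ))
            * ENNReal.ofReal l⁻¹) ∂ν := by
        simp_rw [← lintegral_mul_const' _ _ ENNReal.ofReal_ne_top]
        refine lintegral_lintegral_swap (Measurable.aemeasurable ?_)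
        fun_prop
    _ = ∫⁻ _, ENNReal.ofReal (1 / (x₁ : ℝ)) ∂ν := by
        refine lintegral_congr_ae ?_
        filter_upwards [hν] with ξ hξ using lintegral_Ioi_poisson_weight_mul_inv hξ hx
    _ = ENNReal.ofReal (1 / (x₁ : ℝ)) := by simp
end
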